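/- Let p ≥ 2 and n ≥ 1 be integers and L ≥ 1 an integer. If ⌊n/p^L⌋ - p^L ≤ ⌊n/p^(L+1)⌋ + 1 then n(p-1) + p < p(p^L + 1)². -/

import Mathlib

-- Multiply the hypothesis by `p` and use `p * (q / p) ≤ q` to remove the floor.
lemma mul_sub_one_le_of_sub_le_div_add_one {p q m : ℕ}
    (h : (q : ℤ) - m ≤ ((q / p : ℕ) : ℤ) + 1) :
    (q : ℤ) * (p - 1) ≤ p * m + p := by
  have hfloor : ((q / p : ℕ) : ℤ) * p ≤ q := by exact_mod_cast Nat.div_mul_le_self q p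
  nlinarith [mul_le_mul_of_nonneg_right h (Nat.cast_nonneg (α := ℤ) p)]

lemma mul_sub_one_add_lt_mul_add_one_sq {n q p d : ℤ} (hp : 1 ≤ p) (hd : 1 ≤ d)
    (hn : n < (q + 1) * d) (hq : q * (p - 1) ≤ p * d + p) :
    n * (p - 1) + p < p * (d + 1) ^ 2 := by
  nlinarith [mul_le_mul_of_nonneg_right (Int.le_sub_one_of_lt hn) (by linarith : (0 : ℤ) ≤ p - 1),
    mul_le_mul_of_nonneg_right hq (by linarith : (0 : ℤ) ≤ d)]

theorem stmt_4_general (p n : ℕ) (hp : 2 ≤ p) (L : ℕ)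
    (h : ((n / p ^ L : ℕ) : ℤ) - (p : ℤ) ^ L ≤ ((n / p ^ (L + 1) : ℕ) : ℤ) + 1) :
    (n : ℤ) * ((p : ℤ) - 1) + p < (p : ℤ) * ((p : ℤ) ^ L + 1) ^ 2 := by
  have hpL : 0 < p ^ L := by positivity
  rw [pow_succ, ← Nat.div_div_eq_div_mul] at h
  have hq := mul_sub_one_le_of_sub_le_div_add_one (p := p) (q := n / p ^ L) (m := p ^ L)
    (by rwa [Nat.cast_pow])
  have hn : n < (n / p ^ L + 1) * p ^ L := by
    rw [add_one_mul]; exact Nat.lt_div_mul_add hpL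
  rw [Nat.cast_pow] at hq
  exact mul_sub_one_add_lt_mul_add_one_sq (by norm_cast; omega) (by exact_mod_cast hpL)
    (by exact_mod_cast hn) hq

/-- Second half of the local-minimum condition implies `n(p-1) + p < p(p^L + 1)²`. -/
theorem stmt_4 (p n : ℕ) (hp : 2 ≤ p) (hn : 1 ≤ n) (L : ℕ) (hL : 1 ≤ L)
    (h : ((n / p ^ L : ℕ) : ℤ) - (p : ℤ) ^ L ≤ ((n / p ^ (L + 1) : ℕ) : ℤ) + 1) :
    (n : ℤ) * ((p : ℤ) - 1) + p < (p : ℤ) * ((p : ℤ) ^ L + 1) ^ 2 :=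
  stmt_4_general p n hp L h
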